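/- Let μ ≠ 0, ε = ±1. The Ricci tensor ρ_{ij} = Σ_k (∂_kΓ^k_{ij} − ∂_iΓ^k_{kj} + Σ_l(Γ^k_{kl}Γ^l_{ij} − Γ^k_{il}Γ^l_{kj})) of the metric g₁₁ = (ε/μ)(e^{−2μx₃} − 1), g₁₂ = 1, g₁₃ = μx₂, g₃₃ = 1 on ℝ³ is given by ρ₁₁ = −½εμ(3e^{−2μx₃} − 1), ρ₁₂ = −½μ², ρ₁₃ = −½μ³x₂, ρ₂₂ = ρ₂₃ = 0, ρ₃₃ = −½μ². -/

import Mathlib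

/-!
Since `det g = -1` is constant, the contracted symbols `Γ^k_{kj} = ∂_j log √|det g|` vanish
identically. This kills the terms `∂_iΓ^k_{kj}` and `Γ^k_{kl}Γ^l_{ij}`, leaving
`ρ_{ij} = ∂_kΓ^k_{ij} - Γ^k_{il}Γ^l_{kj}`, whose two parts are computed directly.
-/

/-- A point of `ℝ³`. -/
abbrev Pt := Fin 3 → ℝ

/-- Partial derivative `∂ᵢ f` of a scalar function on `ℝ³`. -/
noncomputable def pder (i : Fin 3) (f : Pt → ℝ) (p : Pt) : ℝ :=
  fderiv ℝ f p (Pi.single i 1)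

/-- The Christoffel symbols of `g` (index order `k i j`). -/
noncomputable def Γexp (μ ε : ℝ) (p : Pt) : Fin 3 → Fin 3 → Fin 3 → ℝ :=
  ![![![0, 0, -(μ/2)],
     ![0, 0, 0],
     ![-(μ/2), 0, 0]],
    ![![-(ε * μ * p 1 * Real.exp (-(2*μ*p 2))), -(μ^2 * p 1 / 2),
        -((ε * Real.exp (-(2*μ*p 2)) + ε + μ^3 * (p 1)^2) / 2)],
     ![-(μ^2 * p 1 / 2), 0, μ/2],
     ![-((ε * Real.exp (-(2*μ*p 2)) + ε + μ^3 * (p 1)^2) / 2), μ/2, 0]],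
    ![![ε * Real.exp (-(2*μ*p 2)), μ/2, μ^2 * p 1 / 2],
     ![μ/2, 0, 0],
     ![μ^2 * p 1 / 2, 0, 0]]]

/-- The Ricci tensor
`ρ_{ij} = Σ_k (∂_kΓ^k_{ij} − ∂_iΓ^k_{kj} + Σ_l(Γ^k_{kl}Γ^l_{ij} − Γ^k_{il}Γ^l_{kj}))`. -/
noncomputable def Ricci (μ ε : ℝ) (i j : Fin 3) (p : Pt) : ℝ :=
  ∑ k : Fin 3, (pder k (fun q => Γexp μ ε q k i j) p - pder i (fun q => Γexp μ ε q k k j) p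
    + ∑ l : Fin 3, (Γexp μ ε p k k l * Γexp μ ε p l i j - Γexp μ ε p k i l * Γexp μ ε p l k j))

/-- The explicit Ricci tensor of `g`. -/
noncomputable def RicciExp (μ ε : ℝ) (p : Pt) : Matrix (Fin 3) (Fin 3) ℝ :=
  ![![-(1/2) * ε * μ * (3 * Real.exp (-(2*μ*p 2)) - 1), -(1/2) * μ^2, -(1/2) * μ^3 * p 1],
    ![-(1/2) * μ^2, 0, 0],
    ![-(1/2) * μ^3 * p 1, 0, -(1/2) * μ^2]]

section PartialDerivative

variable {f g : Pt → ℝ} {p : Pt} (i : Fin 3)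

lemma pder_const (c : ℝ) : pder i (fun _ => c) p = 0 := by
  simp [pder]

lemma pder_apply (j : Fin 3) : pder i (fun q => q j) p = (Pi.single i 1 : Pt) j := by
  rw [pder, (hasFDerivAt_apply j p).fderiv]
  rfl

lemma pder_add (hf : DifferentiableAt ℝ f p) (hg : DifferentiableAt ℝ g p) :
    pder i (fun q => f q + g q) p = pder i f p + pder i g p := by
  simp [pder, fderiv_fun_add hf hg]

lemma pder_neg : pder i (fun q => -f q) p = -pder i f p := by
  simp [pder, fderiv_fun_neg]

lemma pder_mul (hf : DifferentiableAt ℝ f p) (hg : DifferentiableAt ℝ g p) :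
    pder i (fun q => f q * g q) p = f p * pder i g p + pder i f p * g p := by
  simp only [pder, fderiv_fun_mul hf hg, add_apply, smul_apply, smul_eq_mul]
  ring

lemma pder_div_const (hf : DifferentiableAt ℝ f p) (c : ℝ) :
    pder i (fun q => f q / c) p = pder i f p / c := by
  simp only [div_eq_mul_inv]
  rw [pder_mul i hf (differentiableAt_const _), pder_const]
  ring

lemma pder_pow (hf : DifferentiableAt ℝ f p) (n : ℕ) :
    pder i (fun q => f q ^ n) p = n * f p ^ (n - 1) * pder i f p := by
  simp [pder, fderiv_fun_pow n hf]

lemma pder_exp (hf : DifferentiableAt ℝ f p) :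
    pder i (fun q => Real.exp (f q)) p = Real.exp (f p) * pder i f p := by
  simp [pder, fderiv_exp hf]

lemma pder_sum {ι : Type*} (s : Finset ι) {F : ι → Pt → ℝ}
    (hF : ∀ k ∈ s, DifferentiableAt ℝ (F k) p) :
    pder i (fun q => ∑ k ∈ s, F k q) p = ∑ k ∈ s, pder i (F k) p := by
  simp [pder, fderiv_fun_sum hF]

end PartialDerivative

section Christoffel

variable (μ ε : ℝ)

lemma differentiable_Γexp (k i j : Fin 3) : Differentiable ℝ (fun q => Γexp μ ε q k i j) := by
  fin_cases k <;> fin_cases i <;> fin_cases j <;>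
    simp only [Γexp, Fin.zero_eta, Fin.mk_one, Fin.reduceFinMk, Matrix.cons_val] <;> fun_prop

lemma sum_Γexp_diag_eq_zero (p : Pt) (j : Fin 3) : ∑ k, Γexp μ ε p k k j = 0 := by
  fin_cases j <;>
    simp only [Γexp, Fin.sum_univ_three, Fin.zero_eta, Fin.mk_one, Fin.reduceFinMk,
      Matrix.cons_val] <;> ring

lemma Ricci_eq_sum_pder_sub_sum_mul (i j : Fin 3) (p : Pt) :
    Ricci μ ε i j p = ∑ k, pder k (fun q => Γexp μ ε q k i j) p
      - ∑ k, ∑ l, Γexp μ ε p k i l * Γexp μ ε p l k j := by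
  have h_pder_trace : ∑ k, pder i (fun q => Γexp μ ε q k k j) p = 0 := by
    rw [← pder_sum i _ fun k _ => (differentiable_Γexp μ ε k k j).differentiableAt]
    simp only [sum_Γexp_diag_eq_zero, pder_const]
  have h_trace_mul : ∑ k, ∑ l, Γexp μ ε p k k l * Γexp μ ε p l i j = 0 := by
    rw [Finset.sum_comm]
    simp only [← Finset.sum_mul, sum_Γexp_diag_eq_zero, zero_mul, Finset.sum_const_zero]
  simp only [Ricci, Finset.sum_add_distrib, Finset.sum_sub_distrib, h_pder_trace,
    h_trace_mul]
  ring

lemma sum_pder_Γexp (p : Pt) (i j : Fin 3) :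
    ∑ k, pder k (fun q => Γexp μ ε q k i j) p =
      ![![-3 * ε * μ * Real.exp (-(2*μ*p 2)), -(μ^2/2), -(μ^3 * p 1)],
        ![-(μ^2/2), 0, 0],
        ![-(μ^3 * p 1), 0, 0]] i j := by
  fin_cases i <;> fin_cases j <;>
    simp (disch := fun_prop) only [Γexp, Fin.sum_univ_three, Fin.zero_eta, Fin.mk_one,
      Fin.reduceFinMk, Matrix.cons_val, pder_const, pder_apply, Pi.single_apply, Fin.reduceEq,
      ↓reduceIte, pder_add, pder_neg, pder_mul, pder_div_const, pder_pow, pder_exp] <;> ring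

end Christoffel

theorem ricci_tensor_general (μ ε : ℝ) :
    ∀ (p : Pt) (i j : Fin 3), Ricci μ ε i j p = RicciExp μ ε p i j := by
  intro p i j
  rw [Ricci_eq_sum_pder_sub_sum_mul, sum_pder_Γexp]
  fin_cases i <;> fin_cases j <;>
    simp only [RicciExp, Γexp, Fin.sum_univ_three, Fin.zero_eta, Fin.mk_one, Fin.reduceFinMk,
      Matrix.cons_val] <;> ring

/-- The Ricci tensor of `g` has exactly the listed components. -/
theorem ricci_tensor (μ ε : ℝ) (hμ : μ ≠ 0) (hε : ε = 1 ∨ ε = -1) :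
    ∀ (p : Pt) (i j : Fin 3), Ricci μ ε i j p = RicciExp μ ε p i j :=
  ricci_tensor_general μ ε
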